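/- If the base samples ε¹, ε², … are i.i.d. standard Gaussian N(0, I_q) vectors, then for every δ > 0 there exist K < ∞ and β > 0 such that ℙ(dist(x̂_N, 𝒳*) > δ) ≤ K·e^{−βN} for all N ≥ 1. -/

import Mathlib

/-!
Since `μ` and `Λ` are Lipschitz on the compact set `𝕏` (constants `Kμ`, `KΛ`), `x ↦ A(x, ε)` is
Lipschitz on `𝕏` with the random constant `κ(ε) = L_a L_g (Kμ + KΛ ‖ε‖)`, and `|A(x, ε)|` grows at
most linearly in `‖ε‖`; Gaussian tails (Fernique) then give all the exponential moments needed.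
Cramér's bound makes a fixed deviation of a sample mean exponentially unlikely: the cumulant
generating function `ψ` of a summand `f` has `ψ'(0) = 𝔼 f`, so `ψ(t) < t (𝔼 f + s)` for some small
`t > 0`, and Chernoff's inequality gives the rate `t (𝔼 f + s) - ψ(t) > 0`. A deviation
`|α̂_N x - α x| ≥ η` anywhere on `𝕏` forces one of finitely many such events: a deviation `≥ η / 3`
at a point of a finite net, or the sample mean of `κ` exceeding `𝔼 κ + 1`. Finally, if `η` is half
the gap between `max α` and the maximum of `α` over the points at distance `≥ δ` from `argmax α`,
every maximizer of a function uniformly `η`-close to `α` lies within `δ` of `argmax α`.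
-/

open MeasureTheory ProbabilityTheory Topology

/-- The standard Gaussian measure `N(0, I_q)` on `ℝ^q`, as the pushforward of the product of
`q` standard one-dimensional Gaussians under the identification `(Fin q → ℝ) ≃ ℝ^q`. -/
noncomputable def stdGaussian (q : ℕ) : Measure (EuclideanSpace ℝ (Fin q)) :=
  (Measure.pi fun _ : Fin q => gaussianReal 0 1).map
    (MeasurableEquiv.toLp 2 (Fin q → ℝ))

def ExponentiallySmall (u : ℕ → ℝ) : Prop :=
  ∃ C : ℝ, ∃ β > (0 : ℝ), ∀ N : ℕ, u N ≤ C * Real.exp (-β * N)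

namespace ExponentiallySmall

variable {u v : ℕ → ℝ}

lemma mono (hv : ExponentiallySmall v) (huv : ∀ N, u N ≤ v N) : ExponentiallySmall u := by
  obtain ⟨C, β, hβ, hv⟩ := hv
  exact ⟨C, β, hβ, fun N => (huv N).trans (hv N)⟩

lemma zero : ExponentiallySmall fun _ => 0 :=
  ⟨0, 1, one_pos, fun N => by simp⟩

lemma add (hu : ExponentiallySmall u) (hv : ExponentiallySmall v) :
    ExponentiallySmall (u + v) := by
  obtain ⟨C, β, hβ, hu⟩ := hu
  obtain ⟨D, γ, hγ, hv⟩ := hv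
  refine ⟨|C| + |D|, min β γ, lt_min hβ hγ, fun N => ?_⟩
  calc u N + v N ≤ |C| * Real.exp (-β * N) + |D| * Real.exp (-γ * N) := by
        gcongr
        · exact (hu N).trans (by gcongr; exact le_abs_self C)
        · exact (hv N).trans (by gcongr; exact le_abs_self D)
    _ ≤ (|C| + |D|) * Real.exp (-min β γ * N) := by
        rw [add_mul]
        gcongr
        exacts [min_le_left _ _, min_le_right _ _]

lemma finset_sum {ι : Type*} (s : Finset ι) {u : ι → ℕ → ℝ}
    (hu : ∀ i ∈ s, ExponentiallySmall (u i)) :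
    ExponentiallySmall (fun N => ∑ i ∈ s, u i N) := by
  classical
  induction s using Finset.induction_on with
  | empty => simpa using zero
  | insert i s hi ih =>
    simp_rw [Finset.sum_insert hi]
    exact (hu i (s.mem_insert_self i)).add (ih fun j hj => hu j (Finset.mem_insert_of_mem hj))

end ExponentiallySmall

noncomputable def sampleMean {Ω E : Type*} (f : E → ℝ) (ε : ℕ → Ω → E) (N : ℕ) (ω : Ω) : ℝ :=
  (N : ℝ)⁻¹ * ∑ i ∈ Finset.range N, f (ε i ω)

section SampleMean

variable {Ω E : Type*} {f : E → ℝ} {ε : ℕ → Ω → E}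

lemma natCast_mul_sampleMean (N : ℕ) (ω : Ω) :
    N * sampleMean f ε N ω = ∑ i ∈ Finset.range N, f (ε i ω) := by
  rcases N.eq_zero_or_pos with rfl | hN
  · simp
  · rw [sampleMean, ← mul_assoc, mul_inv_cancel₀ (by positivity), one_mul]

lemma sampleMean_neg (N : ℕ) (ω : Ω) : sampleMean (-f) ε N ω = -sampleMean f ε N ω := by
  simp [sampleMean]

lemma abs_sampleMean_sub_le {g κ : E → ℝ} {c : ℝ} (h : ∀ e, |f e - g e| ≤ κ e * c)
    (N : ℕ) (ω : Ω) : |sampleMean f ε N ω - sampleMean g ε N ω| ≤ sampleMean κ ε N ω * c := by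
  simp only [sampleMean, ← mul_sub, ← Finset.sum_sub_distrib, abs_mul, abs_inv, Nat.abs_cast,
    mul_assoc, Finset.sum_mul]
  gcongr
  exact (Finset.abs_sum_le_sum_abs _ _).trans (Finset.sum_le_sum fun i _ => h _)

end SampleMean

lemma abs_integral_sub_integral_le {E : Type*} [MeasurableSpace E] {ν : Measure E}
    {f g κ : E → ℝ} (hf : Integrable f ν) (hg : Integrable g ν) (hκ : Integrable κ ν) {c : ℝ}
    (h : ∀ e, |f e - g e| ≤ κ e * c) : |∫ e, f e ∂ν - ∫ e, g e ∂ν| ≤ (∫ e, κ e ∂ν) * c := by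
  rw [← integral_sub hf hg, ← integral_mul_const]
  exact (abs_integral_le_integral_abs).trans (integral_mono (hf.sub hg).abs (hκ.mul_const c) h)

lemma lipschitzOnWith_integral {X E : Type*} [PseudoMetricSpace X] [MeasurableSpace E]
    {ν : Measure E} {K : Set X} {F : X → E → ℝ} {κ : E → ℝ} (hF : ∀ x ∈ K, Integrable (F x) ν)
    (hκ : Integrable κ ν) (hLip : ∀ x ∈ K, ∀ y ∈ K, ∀ e, |F x e - F y e| ≤ κ e * dist x y) :
    LipschitzOnWith (∫ e, κ e ∂ν).toNNReal (fun x => ∫ e, F x e ∂ν) K :=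
  LipschitzOnWith.of_dist_le_mul fun x hx y hy => by
    rw [Real.dist_eq]
    exact (abs_integral_sub_integral_le (hF x hx) (hF y hy) hκ (hLip x hx y hy)).trans
      (by gcongr; exact Real.le_coe_toNNReal _)

lemma abs_sampleMean_sub_integral_le {Ω E : Type*} [MeasurableSpace E] {ν : Measure E}
    {f g κ : E → ℝ} (hf : Integrable f ν) (hg : Integrable g ν) (hκ : Integrable κ ν) {c : ℝ}
    (h : ∀ e, |f e - g e| ≤ κ e * c) (ε : ℕ → Ω → E) (N : ℕ) (ω : Ω) :
    |sampleMean f ε N ω - ∫ e, f e ∂ν|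
      ≤ |sampleMean g ε N ω - ∫ e, g e ∂ν| + (sampleMean κ ε N ω + ∫ e, κ e ∂ν) * c := by
  have hmean := abs_sampleMean_sub_le (ε := ε) h N ω
  have hintegral := abs_integral_sub_integral_le hf hg hκ h
  have h₁ := abs_sub_le (sampleMean f ε N ω) (sampleMean g ε N ω) (∫ e, f e ∂ν)
  have h₂ := abs_sub_le (sampleMean g ε N ω) (∫ e, g e ∂ν) (∫ e, f e ∂ν)
  rw [abs_sub_comm (∫ e, g e ∂ν)] at h₂
  linarith

lemma exists_pos_cgf_lt_mul {Ω : Type*} {m : MeasurableSpace Ω} {μ : Measure Ω}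
    [IsProbabilityMeasure μ] {X : Ω → ℝ} (hX : 0 ∈ interior (integrableExpSet X μ))
    {s : ℝ} (hs : 0 < s) :
    ∃ t > 0, t ∈ integrableExpSet X μ ∧ cgf X μ t < t * (μ[X] + s) := by
  have hderiv : HasDerivAt (cgf X μ) μ[X] 0 := by
    simpa [deriv_cgf_zero hX] using (analyticAt_cgf hX).differentiableAt.hasDerivAt
  have hslope : ∀ᶠ t in 𝓝[>] 0, t⁻¹ * cgf X μ t < μ[X] + s := by
    simpa [cgf_zero] using
      hderiv.tendsto_slope_zero_right.eventually (gt_mem_nhds (lt_add_of_pos_right _ hs))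
  have hint : ∀ᶠ t in 𝓝[>] 0, t ∈ interior (integrableExpSet X μ) :=
    nhdsWithin_le_nhds (isOpen_interior.mem_nhds hX)
  obtain ⟨t, ht, htX, htpos⟩ := (hslope.and (hint.and self_mem_nhdsWithin)).exists
  refine ⟨t, htpos, interior_subset htX, ?_⟩
  rwa [inv_mul_lt_iff₀ htpos] at ht

lemma zero_mem_interior_integrableExpSet_neg {Ω : Type*} {m : MeasurableSpace Ω} {μ : Measure Ω}
    {X : Ω → ℝ} (hX : 0 ∈ interior (integrableExpSet X μ)) :
    0 ∈ interior (integrableExpSet (-X) μ) := by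
  have h : integrableExpSet (-X) μ = Homeomorph.neg ℝ ⁻¹' integrableExpSet X μ := by
    ext t
    simp [integrableExpSet]
  rw [h, ← (Homeomorph.neg ℝ).preimage_interior]
  simpa using hX

lemma zero_mem_interior_integrableExpSet_of_abs_le {E : Type*} [SeminormedAddCommGroup E]
    [MeasurableSpace E] {ν : Measure E} [IsFiniteMeasure ν]
    (hν : ∀ t, Integrable (fun e => Real.exp (t * ‖e‖)) ν) {f : E → ℝ}
    (hf : AEStronglyMeasurable f ν) {c d : ℝ} (hfb : ∀ e, |f e| ≤ c + d * ‖e‖) :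
    0 ∈ interior (integrableExpSet f ν) := by
  have hall : integrableExpSet f ν = Set.univ := by
    refine Set.eq_univ_of_forall fun t => ((hν (|t| * d)).const_mul (Real.exp (|t| * c))).mono'
      (Real.continuous_exp.comp_aestronglyMeasurable (hf.const_mul t)) (ae_of_all _ fun e => ?_)
    rw [Real.norm_of_nonneg (Real.exp_nonneg _), ← Real.exp_add, Real.exp_le_exp]
    calc t * f e ≤ |t| * |f e| := by rw [← abs_mul]; exact le_abs_self _
      _ ≤ |t| * (c + d * ‖e‖) := by gcongr; exact hfb e
      _ = |t| * c + |t| * d * ‖e‖ := by ring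
  simp [hall]

theorem IsCompact.exists_pos_infDist_argmax_le_of_uniform_approx {X : Type*}
    [PseudoMetricSpace X] {K : Set X} (hK : IsCompact K) {α : X → ℝ} (hα : ContinuousOn α K)
    {δ : ℝ} (hδ : 0 < δ) :
    ∃ η > 0, ∀ φ : X → ℝ, (∀ y ∈ K, |φ y - α y| < η) → ∀ x ∈ K, (∀ y ∈ K, φ y ≤ φ x) →
      Metric.infDist x {x ∈ K | ∀ y ∈ K, α y ≤ α x} ≤ δ := by
  set S := {x ∈ K | ∀ y ∈ K, α y ≤ α x}
  set far := K ∩ {x | δ ≤ Metric.infDist x S}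
  rcases far.eq_empty_or_nonempty with hfar | hfar
  · refine ⟨1, one_pos, fun φ _ x hx _ => ?_⟩
    by_contra! h
    exact Set.eq_empty_iff_forall_notMem.mp hfar x ⟨hx, h.le⟩
  have hfar_compact : IsCompact far :=
    hK.inter_right (isClosed_le continuous_const (Metric.continuous_infDist_pt S))
  obtain ⟨z, hz, hz_max⟩ := hfar_compact.exists_isMaxOn hfar (hα.mono Set.inter_subset_left)
  obtain ⟨w, hw, hw_max⟩ := hK.exists_isMaxOn (hfar.mono Set.inter_subset_left) hα
  have hzw : α z < α w := by
    have hzS : z ∉ S := fun hzS => by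
      have := hz.2
      rw [Set.mem_ofPred_eq, Metric.infDist_zero_of_mem hzS] at this
      linarith
    obtain ⟨y, hy, hzy⟩ : ∃ y ∈ K, α z < α y := by
      by_contra! h
      exact hzS ⟨hz.1, h⟩
    exact hzy.trans_le (hw_max hy)
  refine ⟨(α w - α z) / 2, by linarith, fun φ hφ x hx hx_max => ?_⟩
  by_contra! h
  have hxz : α x ≤ α z := hz_max ⟨hx, h.le⟩
  have hwx := hx_max w hw
  have hφw := abs_lt.mp (hφ w hw)
  have hφx := abs_lt.mp (hφ x hx)
  linarith

section IID

variable {Ω E : Type*} {mΩ : MeasurableSpace Ω} {P : Measure Ω} [IsProbabilityMeasure P]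
  [MeasurableSpace E] {ν : Measure E} [IsProbabilityMeasure ν] {ε : ℕ → Ω → E}

lemma exponentiallySmall_measureReal_sampleMean_ge (hε : ∀ i, Measurable (ε i))
    (hindep : iIndepFun ε P) (hlaw : ∀ i, P.map (ε i) = ν) {f : E → ℝ} (hf : Measurable f)
    (hexp : 0 ∈ interior (integrableExpSet f ν)) {s : ℝ} (hs : 0 < s) :
    ExponentiallySmall fun N => P.real {ω | ∫ e, f e ∂ν + s ≤ sampleMean f ε N ω} := by
  obtain ⟨t, ht, htf, hcgf⟩ := exists_pos_cgf_lt_mul hexp hs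
  refine ⟨1, t * (∫ e, f e ∂ν + s) - cgf f ν t, by linarith, fun N => ?_⟩
  set Y : ℕ → Ω → ℝ := fun i ω => f (ε i ω)
  have hYmeas : ∀ i, Measurable (Y i) := fun i => hf.comp (hε i)
  have hYindep : iIndepFun Y P := hindep.comp (fun _ => f) (fun _ => hf)
  have hexp_meas : AEStronglyMeasurable (fun e => Real.exp (t * f e)) ν := by fun_prop
  have hYint : ∀ i, Integrable (fun ω => Real.exp (t * Y i ω)) P := fun i => by
    rw [← hlaw i] at htf hexp_meas
    exact (integrable_map_measure hexp_meas (hε i).aemeasurable).mp htf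
  have hYcgf : ∀ i, cgf (Y i) P t = cgf f ν t := fun i => by
    rw [← hlaw i] at hexp_meas ⊢
    rw [cgf, cgf, mgf_map (hε i).aemeasurable hexp_meas]
    rfl
  calc P.real {ω | ∫ e, f e ∂ν + s ≤ sampleMean f ε N ω}
      ≤ P.real {ω | N * (∫ e, f e ∂ν + s) ≤ (∑ i ∈ Finset.range N, Y i) ω} := by
        refine measureReal_mono fun ω hω => ?_
        simp only [Set.mem_ofPred_eq, Finset.sum_apply, Y, ← natCast_mul_sampleMean] at hω ⊢
        gcongr
    _ ≤ Real.exp (-t * (N * (∫ e, f e ∂ν + s)) + cgf (∑ i ∈ Finset.range N, Y i) P t) :=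
        measure_ge_le_exp_cgf _ ht.le (hYindep.integrable_exp_mul_sum hYmeas fun i _ => hYint i)
    _ = 1 * Real.exp (-(t * (∫ e, f e ∂ν + s) - cgf f ν t) * N) := by
        rw [hYindep.cgf_sum hYmeas fun i _ => hYint i]
        simp only [hYcgf, Finset.sum_const, Finset.card_range, nsmul_eq_mul]
        ring_nf

lemma exponentiallySmall_measureReal_abs_sampleMean_sub_ge (hε : ∀ i, Measurable (ε i))
    (hindep : iIndepFun ε P) (hlaw : ∀ i, P.map (ε i) = ν) {f : E → ℝ} (hf : Measurable f)
    (hexp : 0 ∈ interior (integrableExpSet f ν)) {s : ℝ} (hs : 0 < s) :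
    ExponentiallySmall fun N => P.real {ω | s ≤ |sampleMean f ε N ω - ∫ e, f e ∂ν|} := by
  refine ((exponentiallySmall_measureReal_sampleMean_ge hε hindep hlaw hf hexp hs).add
    (exponentiallySmall_measureReal_sampleMean_ge hε hindep hlaw hf.neg
      (zero_mem_interior_integrableExpSet_neg hexp) hs)).mono fun N => ?_
  refine (measureReal_mono fun ω hω => ?_).trans (measureReal_union_le _ _)
  simp only [Set.mem_ofPred_eq, Set.mem_union, sampleMean_neg, Pi.neg_apply,
    integral_neg] at hω ⊢
  rcases le_abs'.mp hω with h | h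
  · right; linarith
  · left; linarith

variable {X : Type*} [PseudoMetricSpace X]

lemma exponentiallySmall_measureReal_exists_abs_sampleMean_sub_ge (hε : ∀ i, Measurable (ε i))
    (hindep : iIndepFun ε P) (hlaw : ∀ i, P.map (ε i) = ν) {K : Set X} (hK : TotallyBounded K)
    {F : X → E → ℝ} (hF : ∀ x ∈ K, Measurable (F x))
    (hFexp : ∀ x ∈ K, 0 ∈ interior (integrableExpSet (F x) ν)) {κ : E → ℝ}
    (hκ : Measurable κ) (hκexp : 0 ∈ interior (integrableExpSet κ ν)) (hκ0 : ∀ e, 0 ≤ κ e)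
    (hLip : ∀ x ∈ K, ∀ y ∈ K, ∀ e, |F x e - F y e| ≤ κ e * dist x y) {η : ℝ} (hη : 0 < η) :
    ExponentiallySmall fun N =>
      P.real {ω | ∃ x ∈ K, η ≤ |sampleMean (F x) ε N ω - ∫ e, F x e ∂ν|} := by
  have hκint0 : 0 ≤ ∫ e, κ e ∂ν := integral_nonneg hκ0
  set M := ∫ e, κ e ∂ν + 1
  have hM : 0 < M := by positivity
  obtain ⟨t, htK, htfin, hcover⟩ :=
    Metric.finite_approx_of_totallyBounded hK (η / (3 * M)) (by positivity)
  refine ((ExponentiallySmall.finset_sum htfin.toFinset fun z hz =>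
    exponentiallySmall_measureReal_abs_sampleMean_sub_ge hε hindep hlaw
      (hF z (htK (htfin.mem_toFinset.mp hz))) (hFexp z (htK (htfin.mem_toFinset.mp hz)))
      (by positivity : 0 < η / 3)).add
    (exponentiallySmall_measureReal_sampleMean_ge hε hindep hlaw hκ hκexp one_pos)).mono
    fun N => ?_
  refine (measureReal_mono ?_).trans ((measureReal_union_le _ _).trans
    (add_le_add (measureReal_biUnion_finset_le _ _) le_rfl))
  rintro ω ⟨x, hx, hdev⟩
  obtain ⟨z, hzt, hxz⟩ := Set.mem_iUnion₂.mp (hcover hx)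
  by_contra! hω
  simp only [Set.mem_union, Set.mem_iUnion, Set.mem_ofPred_eq, not_or, not_exists, not_le,
    Set.Finite.mem_toFinset] at hω
  have hκint := integrable_of_mem_interior_integrableExpSet hκexp
  have hclose := abs_sampleMean_sub_integral_le
    (integrable_of_mem_interior_integrableExpSet (hFexp x hx))
    (integrable_of_mem_interior_integrableExpSet (hFexp z (htK hzt))) hκint
    (hLip x hx z (htK hzt)) ε N ω
  have hdist : M * dist x z ≤ η / 3 := by
    rw [Metric.mem_ball, lt_div_iff₀ (by positivity)] at hxz
    linarith
  have hmodulus : (sampleMean κ ε N ω + ∫ e, κ e ∂ν) * dist x z ≤ 2 * (M * dist x z) := by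
    nlinarith [hω.2, dist_nonneg (x := x) (y := z)]
  linarith [hω.1 z hzt]

theorem exponentiallySmall_measureReal_lt_infDist_argmax (hε : ∀ i, Measurable (ε i))
    (hindep : iIndepFun ε P) (hlaw : ∀ i, P.map (ε i) = ν) {K : Set X} (hK : IsCompact K)
    {F : X → E → ℝ} (hF : ∀ x ∈ K, Measurable (F x))
    (hFexp : ∀ x ∈ K, 0 ∈ interior (integrableExpSet (F x) ν)) {κ : E → ℝ}
    (hκ : Measurable κ) (hκexp : 0 ∈ interior (integrableExpSet κ ν)) (hκ0 : ∀ e, 0 ≤ κ e)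
    (hLip : ∀ x ∈ K, ∀ y ∈ K, ∀ e, |F x e - F y e| ≤ κ e * dist x y) {xhat : ℕ → Ω → X}
    (hxhatK : ∀ N ω, xhat N ω ∈ K)
    (hxhat : ∀ N ω, ∀ y ∈ K, sampleMean (F y) ε N ω ≤ sampleMean (F (xhat N ω)) ε N ω)
    {δ : ℝ} (hδ : 0 < δ) :
    ExponentiallySmall fun N => P.real {ω | δ < Metric.infDist (xhat N ω)
      {x ∈ K | ∀ y ∈ K, ∫ e, F y e ∂ν ≤ ∫ e, F x e ∂ν}} := by
  have hcont : ContinuousOn (fun x => ∫ e, F x e ∂ν) K :=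
    (lipschitzOnWith_integral (fun x hx => integrable_of_mem_interior_integrableExpSet (hFexp x hx))
      (integrable_of_mem_interior_integrableExpSet hκexp) hLip).continuousOn
  obtain ⟨η, hη, hstable⟩ := hK.exists_pos_infDist_argmax_le_of_uniform_approx hcont hδ
  refine (exponentiallySmall_measureReal_exists_abs_sampleMean_sub_ge hε hindep hlaw
    hK.totallyBounded hF hFexp hκ hκexp hκ0 hLip hη).mono fun N => measureReal_mono fun ω hω => ?_
  rw [Set.mem_ofPred_eq]
  by_contra! hclose
  exact (hstable (fun x => sampleMean (F x) ε N ω) hclose _ (hxhatK N ω) (hxhat N ω)).not_gt hω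

end IID

lemma ProbabilityTheory.IsGaussian.integrable_exp_mul_norm {E : Type*} [NormedAddCommGroup E]
    [NormedSpace ℝ E] [CompleteSpace E] [SecondCountableTopology E] [MeasurableSpace E]
    [BorelSpace E] (μ : Measure E) [IsGaussian μ] (t : ℝ) :
    Integrable (fun x => Real.exp (t * ‖x‖)) μ := by
  obtain ⟨C, hC, hint⟩ := IsGaussian.exists_integrable_exp_sq μ
  refine (hint.const_mul (Real.exp (t ^ 2 / (4 * C)))).mono' (by fun_prop)
    (ae_of_all _ fun x => ?_)
  rw [Real.norm_of_nonneg (Real.exp_nonneg _), ← Real.exp_add, Real.exp_le_exp]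
  -- `t r ≤ C r² + t² / (4 C)` is `(2 C r - t)² ≥ 0`
  have : t * ‖x‖ * (4 * C) ≤ (t ^ 2 / (4 * C) + C * ‖x‖ ^ 2) * (4 * C) := by
    field_simp
    nlinarith [sq_nonneg (2 * C * ‖x‖ - t)]
  exact le_of_mul_le_mul_right this (by positivity)

section Reparameterization

variable {X F G : Type*} [PseudoMetricSpace X] [SeminormedAddCommGroup F] [NormedSpace ℝ F]
  [SeminormedAddCommGroup G] [NormedSpace ℝ G] {φ : G → ℝ} {Lφ : NNReal}

lemma LipschitzWith.abs_comp_add_apply_le (hφ : LipschitzWith Lφ φ) (a : G) (T : F →L[ℝ] G)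
    (e : F) : |φ (a + T e)| ≤ |φ a| + Lφ * ‖T‖ * ‖e‖ := by
  have h := hφ.dist_le_mul (a + T e) a
  rw [Real.dist_eq, dist_eq_norm, add_sub_cancel_left] at h
  calc |φ (a + T e)| ≤ |φ a| + |φ (a + T e) - φ a| := by
        simpa using abs_add_le (φ a) (φ (a + T e) - φ a)
    _ ≤ |φ a| + Lφ * (‖T‖ * ‖e‖) := by gcongr; exact h.trans (by gcongr; exact T.le_opNorm e)
    _ = |φ a| + Lφ * ‖T‖ * ‖e‖ := by ring

lemma LipschitzWith.abs_comp_add_apply_sub_le (hφ : LipschitzWith Lφ φ) {s : Set X} {μ : X → G}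
    {Λ : X → F →L[ℝ] G} {Kμ KΛ : NNReal} (hμ : LipschitzOnWith Kμ μ s)
    (hΛ : LipschitzOnWith KΛ Λ s) {x y : X} (hx : x ∈ s) (hy : y ∈ s) (e : F) :
    |φ (μ x + Λ x e) - φ (μ y + Λ y e)| ≤ Lφ * (Kμ + KΛ * ‖e‖) * dist x y := by
  have hΛe : dist (Λ x e) (Λ y e) ≤ dist (Λ x) (Λ y) * ‖e‖ := by
    rw [dist_eq_norm, dist_eq_norm, ← sub_apply]
    exact (Λ x - Λ y).le_opNorm e
  calc |φ (μ x + Λ x e) - φ (μ y + Λ y e)|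
      ≤ Lφ * dist (μ x + Λ x e) (μ y + Λ y e) := by
        rw [← Real.dist_eq]; exact hφ.dist_le_mul _ _
    _ ≤ Lφ * (dist (μ x) (μ y) + dist (Λ x) (Λ y) * ‖e‖) := by
        gcongr; exact (dist_add_add_le _ _ _ _).trans (by gcongr)
    _ ≤ Lφ * (Kμ * dist x y + KΛ * dist x y * ‖e‖) := by
        gcongr
        exacts [hμ.dist_le_mul x hx y hy, hΛ.dist_le_mul x hx y hy]
    _ = Lφ * (Kμ + KΛ * ‖e‖) * dist x y := by ring

lemma LipschitzWith.zero_mem_interior_integrableExpSet_comp_add_apply [MeasurableSpace F]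
    [OpensMeasurableSpace F] {ν : Measure F} [IsFiniteMeasure ν] (hφ : LipschitzWith Lφ φ)
    (hν : ∀ t, Integrable (fun e => Real.exp (t * ‖e‖)) ν) (a : G) (T : F →L[ℝ] G) :
    0 ∈ interior (integrableExpSet (fun e => φ (a + T e)) ν) :=
  zero_mem_interior_integrableExpSet_of_abs_le hν
    (hφ.continuous.comp (by fun_prop)).aestronglyMeasurable (hφ.abs_comp_add_apply_le a T)

end Reparameterization

lemma stdGaussian_eq_stdGaussian (q : ℕ) :
    stdGaussian q = ProbabilityTheory.stdGaussian (EuclideanSpace ℝ (Fin q)) := by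
  rw [_root_.stdGaussian, MeasurableEquiv.coe_toLp, map_pi_eq_stdGaussian]

theorem saa_exponential_rate_mc_acqf_general
    {d q : ℕ} (K : Set (EuclideanSpace ℝ (Fin d))) (hK : IsCompact K)
    (μ : EuclideanSpace ℝ (Fin d) → EuclideanSpace ℝ (Fin q))
    (Λ : EuclideanSpace ℝ (Fin d) →
      (EuclideanSpace ℝ (Fin q) →L[ℝ] EuclideanSpace ℝ (Fin q)))
    (hμ : ContDiff ℝ 1 μ) (hΛ : ContDiff ℝ 1 Λ)
    (g : EuclideanSpace ℝ (Fin q) → EuclideanSpace ℝ (Fin q))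
    (a : EuclideanSpace ℝ (Fin q) → ℝ)
    (Lg La : NNReal) (hg : LipschitzWith Lg g) (ha : LipschitzWith La a)
    (A : EuclideanSpace ℝ (Fin d) → EuclideanSpace ℝ (Fin q) → ℝ)
    (hA : ∀ x ε, A x ε = a (g (μ x + Λ x ε)))
    -- i.i.d. standard Gaussian base samples
    {Ω : Type*} [MeasureSpace Ω] [IsProbabilityMeasure (ℙ : Measure Ω)]
    (ε : ℕ → Ω → EuclideanSpace ℝ (Fin q))
    (hεmeas : ∀ i, Measurable (ε i))
    (hindep : iIndepFun ε ℙ)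
    (hgauss : ∀ i, Measure.map (ε i) ℙ = stdGaussian q)
    -- the true and sample-average acquisition functions
    (α : EuclideanSpace ℝ (Fin d) → ℝ)
    (hα : ∀ x, α x = ∫ e, A x e ∂(stdGaussian q))
    (αhat : ℕ → EuclideanSpace ℝ (Fin d) → Ω → ℝ)
    (hαhat : ∀ N x ω, αhat N x ω = (N : ℝ)⁻¹ * ∑ i ∈ Finset.range N, A x (ε i ω))
    -- SAA maximizers over `K`
    (xhat : ℕ → Ω → EuclideanSpace ℝ (Fin d))
    (hxhatK : ∀ N ω, xhat N ω ∈ K)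
    (hxhat : ∀ N ω, ∀ y ∈ K, αhat N y ω ≤ αhat N (xhat N ω) ω) :
    ∀ δ > (0 : ℝ), ∃ C : ℝ, ∃ β > (0 : ℝ), ∀ N : ℕ, 1 ≤ N →
      (ℙ {ω | Metric.infDist (xhat N ω) {x ∈ K | ∀ y ∈ K, α y ≤ α x} > δ}).toReal ≤
        C * Real.exp (-β * N) := by
  intro δ hδ
  rw [stdGaussian_eq_stdGaussian] at hgauss hα
  set ν := ProbabilityTheory.stdGaussian (EuclideanSpace ℝ (Fin q))
  have hν := IsGaussian.integrable_exp_mul_norm ν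
  obtain ⟨Kμ, hKμ⟩ := hμ.locallyLipschitz.locallyLipschitzOn.exists_lipschitzOnWith_of_compact hK
  obtain ⟨KΛ, hKΛ⟩ := hΛ.locallyLipschitz.locallyLipschitzOn.exists_lipschitzOnWith_of_compact hK
  have hφ := ha.comp hg
  obtain rfl : A = fun x e => (a ∘ g) (μ x + Λ x e) := funext fun x => funext (hA x)
  set κ := fun e : EuclideanSpace ℝ (Fin q) => ↑(La * Lg) * (Kμ + KΛ * ‖e‖)
  have hκexp : 0 ∈ interior (integrableExpSet κ ν) :=
    zero_mem_interior_integrableExpSet_of_abs_le hν (by fun_prop) (c := La * Lg * Kμ)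
      (d := La * Lg * KΛ) fun e => (abs_of_nonneg (by positivity)).trans_le
        (le_of_eq (by simp only [κ, NNReal.coe_mul]; ring))
  obtain ⟨C, β, hβ, hbound⟩ := exponentiallySmall_measureReal_lt_infDist_argmax hεmeas hindep
    hgauss hK (F := fun x e => (a ∘ g) (μ x + Λ x e))
    (fun x _ => (hφ.continuous.comp (by fun_prop)).measurable)
    (fun x _ => hφ.zero_mem_interior_integrableExpSet_comp_add_apply hν (μ x) (Λ x))
    (by fun_prop) hκexp (fun e => by positivity)
    (fun x hx y hy e => hφ.abs_comp_add_apply_sub_le hKμ hKΛ hx hy e) hxhatK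
    (fun N ω y hy => (hαhat N y ω).symm.trans_le ((hxhat N ω y hy).trans_eq (hαhat N _ ω))) hδ
  refine ⟨C, β, hβ, fun N _ => ?_⟩
  simpa only [hα, gt_iff_lt, measureReal_def] using hbound N

/-- **Theorem 1(3) (exponential convergence rate of SAA maximizers).**
In the reparameterized MC acquisition function setting (`𝕏 ⊂ ℝ^d` compact,
`A (x, ε) = a (g (μ x + Λ x ε))` with `μ, Λ` continuously differentiable and `g, a`
Lipschitz), if the base samples are i.i.d. standard Gaussian `N(0, I_q)`, then for every
`δ > 0` there exist `K < ∞` and `β > 0` with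
`ℙ(dist(x̂_N, 𝒳*) > δ) ≤ K e^{-β N}` for all `N ≥ 1`. -/
theorem saa_exponential_rate_mc_acqf
    {d q : ℕ} (K : Set (EuclideanSpace ℝ (Fin d))) (hK : IsCompact K) (hKne : K.Nonempty)
    (μ : EuclideanSpace ℝ (Fin d) → EuclideanSpace ℝ (Fin q))
    (Λ : EuclideanSpace ℝ (Fin d) →
      (EuclideanSpace ℝ (Fin q) →L[ℝ] EuclideanSpace ℝ (Fin q)))
    (hμ : ContDiff ℝ 1 μ) (hΛ : ContDiff ℝ 1 Λ)
    (g : EuclideanSpace ℝ (Fin q) → EuclideanSpace ℝ (Fin q))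
    (a : EuclideanSpace ℝ (Fin q) → ℝ)
    (Lg La : NNReal) (hg : LipschitzWith Lg g) (ha : LipschitzWith La a)
    (A : EuclideanSpace ℝ (Fin d) → EuclideanSpace ℝ (Fin q) → ℝ)
    (hA : ∀ x ε, A x ε = a (g (μ x + Λ x ε)))
    -- i.i.d. standard Gaussian base samples
    {Ω : Type*} [MeasureSpace Ω] [IsProbabilityMeasure (ℙ : Measure Ω)]
    (ε : ℕ → Ω → EuclideanSpace ℝ (Fin q))
    (hεmeas : ∀ i, Measurable (ε i))
    (hindep : iIndepFun ε ℙ)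
    (hgauss : ∀ i, Measure.map (ε i) ℙ = stdGaussian q)
    -- the true and sample-average acquisition functions
    (α : EuclideanSpace ℝ (Fin d) → ℝ)
    (hα : ∀ x, α x = ∫ e, A x e ∂(stdGaussian q))
    (αhat : ℕ → EuclideanSpace ℝ (Fin d) → Ω → ℝ)
    (hαhat : ∀ N x ω, αhat N x ω = (N : ℝ)⁻¹ * ∑ i ∈ Finset.range N, A x (ε i ω))
    -- SAA maximizers over `K`
    (xhat : ℕ → Ω → EuclideanSpace ℝ (Fin d))
    (hxhatK : ∀ N ω, xhat N ω ∈ K)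
    (hxhat : ∀ N ω, ∀ y ∈ K, αhat N y ω ≤ αhat N (xhat N ω) ω) :
    ∀ δ > (0 : ℝ), ∃ C : ℝ, ∃ β > (0 : ℝ), ∀ N : ℕ, 1 ≤ N →
      (ℙ {ω | Metric.infDist (xhat N ω) {x ∈ K | ∀ y ∈ K, α y ≤ α x} > δ}).toReal ≤
        C * Real.exp (-β * N) :=
  saa_exponential_rate_mc_acqf_general K hK μ Λ hμ hΛ g a Lg La hg ha A hA ε hεmeas hindep hgauss α
    hα αhat hαhat xhat hxhatK hxhat
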